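/- In the polar code factor graph G_N (N = 2^n, with possible bottom rows removed by the SEF algorithm), every nonempty stopping set contains all variable nodes of at least one complete row of the graph, i.e., there exists a row index i such that the variable nodes at row i in all n+1 columns belong to the stopping set. -/

import Mathlib

/-- Adjacency in the polar factor graph on `N` rows (`N ≤ 2^n`; the case `N < 2^n`
models the bottom rows being removed by the SEF algorithm while preserving the edge
structure).  The CN at column `m`, row `i` connects horizontally to the VNs at columns
`m` and `m+1` in row `i`; in addition, a slanted edge connects it to the degree-3 VN at
column `m+1` in the strictly larger row `i + h` (with `h = 2^(n-1-m)`), when that row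
exists. -/
def polarAdj (n N : ℕ) (c : Fin n × Fin N) (v : Fin (n + 1) × Fin N) : Prop :=
  (v.1.val = c.1.val ∧ v.2 = c.2) ∨
  (v.1.val = c.1.val + 1 ∧ v.2 = c.2) ∨
  (v.1.val = c.1.val + 1 ∧ c.2.val % (2 * 2 ^ (n - 1 - c.1.val)) < 2 ^ (n - 1 - c.1.val) ∧
    v.2.val = c.2.val + 2 ^ (n - 1 - c.1.val))

/-- A stopping set: a set of variable nodes such that every check node adjacent to a
node of the set has at least two neighbors in the set. -/
def IsStoppingSet (n N : ℕ) (ψ : Set (Fin (n + 1) × Fin N)) : Prop :=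
  ∀ c v, v ∈ ψ → polarAdj n N c v → ∃ w ∈ ψ, w ≠ v ∧ polarAdj n N c w

/-!
Let `i` be the largest row index met by the stopping set `ψ`. A slanted edge always goes
to a strictly larger row, so in row `i` the check node at column `m` meets `ψ` only
through its two horizontal neighbours `(m, i)` and `(m + 1, i)`; being a stopping set,
`ψ` contains either both or neither of them. Hence row `i` lies entirely in `ψ`.
-/

theorem Fin.iff_of_forall_castSucc_iff_succ {n : ℕ} {P : Fin (n + 1) → Prop}
    (h : ∀ m : Fin n, P m.castSucc ↔ P m.succ) (a b : Fin (n + 1)) : P a ↔ P b := by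
  have hzero : ∀ k : Fin (n + 1), P k ↔ P 0 := by
    refine Fin.induction Iff.rfl fun k hk => ?_
    rw [← h k, hk]
  rw [hzero a, hzero b]

theorem polarAdj_iff_of_row_le {n N : ℕ} {c : Fin n × Fin N} {v : Fin (n + 1) × Fin N}
    (hv : v.2 ≤ c.2) :
    polarAdj n N c v ↔ v = (c.1.castSucc, c.2) ∨ v = (c.1.succ, c.2) := by
  have := Nat.two_pow_pos (n - 1 - c.1.val)
  simp only [polarAdj, Prod.ext_iff, Fin.ext_iff, Fin.val_castSucc, Fin.val_succ,
    Fin.le_def] at hv ⊢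
  omega

theorem IsStoppingSet.castSucc_mem_iff_succ_mem {n N : ℕ} {ψ : Set (Fin (n + 1) × Fin N)}
    (hψ : IsStoppingSet n N ψ) {i : Fin N} (hmax : ∀ p ∈ ψ, p.2 ≤ i) (m : Fin n) :
    (m.castSucc, i) ∈ ψ ↔ (m.succ, i) ∈ ψ := by
  have other_mem : ∀ v w : Fin (n + 1) × Fin N, v ≠ w →
      (v = (m.castSucc, i) ∨ v = (m.succ, i)) → (w = (m.castSucc, i) ∨ w = (m.succ, i)) →
      v ∈ ψ → w ∈ ψ := by
    intro v w hvw hv hw hvψ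
    obtain ⟨u, huψ, huv, hu⟩ := hψ (m, i) v hvψ
      ((polarAdj_iff_of_row_le (hmax v hvψ)).2 hv)
    rcases (polarAdj_iff_of_row_le (hmax u huψ)).1 hu with rfl | rfl <;>
      rcases hv with rfl | rfl <;> rcases hw with rfl | rfl <;> simp_all
  have hne : (m.castSucc, i) ≠ (m.succ, i) := by
    simp [Prod.ext_iff, Fin.ext_iff]
  exact ⟨other_mem _ _ hne (.inl rfl) (.inr rfl), other_mem _ _ hne.symm (.inr rfl) (.inl rfl)⟩

theorem stopping_set_full_row_general (n N : ℕ)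
    (ψ : Set (Fin (n + 1) × Fin N)) (hψ : IsStoppingSet n N ψ) (hne : ψ.Nonempty) :
    ∃ i : Fin N, ∀ m : Fin (n + 1), (m, i) ∈ ψ := by
  obtain ⟨a, haψ, hmax⟩ := Set.exists_max_image ψ Prod.snd ψ.toFinite hne
  exact ⟨a.2, fun m => (Fin.iff_of_forall_castSucc_iff_succ (P := fun m => (m, a.2) ∈ ψ)
    (hψ.castSucc_mem_iff_succ_mem hmax) a.1 m).1 haψ⟩

/-- Full-row property: in the polar factor graph `G_N` (`N = 2^n`, possibly with bottom
rows removed by the SEF algorithm, i.e. `N ≤ 2^n`), every nonempty stopping set contains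
all variable nodes of at least one complete row: there is a row index `i` such that the
variable nodes at row `i` in all `n+1` columns belong to the stopping set. -/
theorem stopping_set_full_row (n N : ℕ) (hN : N ≤ 2 ^ n)
    (ψ : Set (Fin (n + 1) × Fin N)) (hψ : IsStoppingSet n N ψ) (hne : ψ.Nonempty) :
    ∃ i : Fin N, ∀ m : Fin (n + 1), (m, i) ∈ ψ :=
  stopping_set_full_row_general n N ψ hψ hne
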